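/- Let V be an ordered finite list of n ≥ 2F+1 real values, and let the F-trimming operation remove the F smallest values strictly less than a reference x and the F largest values strictly greater than x. If at most F of the values are 'corrupted' (arbitrary) and all uncorrupted values lie in an interval [a, b] containing x, then every surviving value v satisfies a' ≤ v ≤ b', where a' = min(x, min of uncorrupted values) and b' = max(x, max of uncorrupted values). -/
import Mathlib


theorem stmt_10 {ι : Type*} [DecidableEq ι]
    (V Elow Ehigh C : Finset ι) (z : ι → ℝ) (x a b : ℝ) (F : ℕ)
    (hV : 2 * F + 1 ≤ V.card)
    (hC : C ⊆ V) (hCcard : C.card ≤ F)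
    (hgood : ∀ j ∈ V \ C, a ≤ z j ∧ z j ≤ b)
    (hxa : a ≤ x) (hxb : x ≤ b)
    (hElow : Elow ⊆ V) (hEhigh : Ehigh ⊆ V)
    -- the trimming removes the F smallest values strictly below x: if a value
    -- strictly below x survives, then Elow has exactly F elements, all with
    -- values at most the surviving one
    (hlowF : ∀ j ∈ V \ (Elow ∪ Ehigh), z j < x →
      Elow.card = F ∧ ∀ k ∈ Elow, z k ≤ z j)
    -- symmetrically for the F largest values strictly above x
    (hhighF : ∀ j ∈ V \ (Elow ∪ Ehigh), x < z j →
      Ehigh.card = F ∧ ∀ k ∈ Ehigh, z j ≤ z k)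
    (hne : (V \ C).Nonempty) :
    ∀ j ∈ V \ (Elow ∪ Ehigh),
      min x (((V \ C).image z).min' (hne.image z)) ≤ z j ∧
      z j ≤ max x (((V \ C).image z).max' (hne.image z)) := by
  intro j hj
  have hjV : j ∈ V := (Finset.mem_sdiff.mp hj).1
  have hjE : j ∉ Elow ∪ Ehigh := (Finset.mem_sdiff.mp hj).2
  constructor
  · rcases le_or_gt x (z j) with h | h
    · exact le_trans (min_le_left _ _) h
    · rcases le_or_gt (((V \ C).image z).min' (hne.image z)) (z j) with h2 | h2
      · exact le_trans (min_le_right _ _) h2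
      · exfalso
        obtain ⟨hcard, hall⟩ := hlowF j hj h
        have hjC : j ∈ C := by
          by_contra hjC
          exact absurd (Finset.min'_le _ _ (Finset.mem_image_of_mem z
            (Finset.mem_sdiff.mpr ⟨hjV, hjC⟩))) (not_le.mpr h2)
        have hsub : insert j Elow ⊆ C := by
          intro k hk
          rcases Finset.mem_insert.mp hk with rfl | hk
          · exact hjC
          · by_contra hkC
            have := Finset.min'_le ((V \ C).image z) (z k)
              (Finset.mem_image_of_mem z (Finset.mem_sdiff.mpr ⟨hElow hk, hkC⟩))
            linarith [hall k hk]
        have hjnot : j ∉ Elow := fun h' => hjE (Finset.mem_union_left _ h')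
        have : F + 1 ≤ C.card := by
          have := Finset.card_le_card hsub
          rw [Finset.card_insert_of_notMem hjnot, hcard] at this; omega
        omega
  · rcases le_or_gt (z j) x with h | h
    · exact le_trans h (le_max_left _ _)
    · rcases le_or_gt (z j) (((V \ C).image z).max' (hne.image z)) with h2 | h2
      · exact le_trans h2 (le_max_right _ _)
      · exfalso
        obtain ⟨hcard, hall⟩ := hhighF j hj h
        have hjC : j ∈ C := by
          by_contra hjC
          exact absurd (Finset.le_max' _ _ (Finset.mem_image_of_mem z
            (Finset.mem_sdiff.mpr ⟨hjV, hjC⟩))) (not_le.mpr h2)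
        have hsub : insert j Ehigh ⊆ C := by
          intro k hk
          rcases Finset.mem_insert.mp hk with rfl | hk
          · exact hjC
          · by_contra hkC
            have := Finset.le_max' ((V \ C).image z) (z k)
              (Finset.mem_image_of_mem z (Finset.mem_sdiff.mpr ⟨hEhigh hk, hkC⟩))
            linarith [hall k hk]
        have hjnot : j ∉ Ehigh := fun h' => hjE (Finset.mem_union_right _ h')
        have : F + 1 ≤ C.card := by
          have := Finset.card_le_card hsub
          rw [Finset.card_insert_of_notMem hjnot, hcard] at this; omega
        omega
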